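/- If ℬ is a chordal building set on a finite set S, then the edge labeling μ_ℬ on the Hasse diagram of P̂_ℬ is reversed edge lexicographical: in each interval [x,y] of P̂_ℬ there is a unique maximal chain c with decreasing label sequence, and μ_ℬ(c) lexicographically succeeds μ_ℬ(c') for every other maximal chain c' of [x,y]. Consequently P̂_ℬ is EL-shellable. -/

import Mathlib

/-- The restriction of a collection of finsets to subsets of `I`. -/
def BS.restrict (B : Finset (Finset ℕ)) (I : Finset ℕ) : Finset (Finset ℕ) :=
  B.filter (· ⊆ I)

/-- `B` is a building set on `S`. -/
def BS.IsBuilding (S : Finset ℕ) (B : Finset (Finset ℕ)) : Prop :=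
  (∀ J ∈ B, J ⊆ S ∧ J.Nonempty) ∧
  (∀ i ∈ S, ({i} : Finset ℕ) ∈ B) ∧
  (∀ I ∈ B, ∀ J ∈ B, (I ∩ J).Nonempty → I ∪ J ∈ B)

/-- `B` is chordal: every "suffix" `{x ∈ I : a ≤ x}` of an element `I` is in `B`. -/
def BS.IsChordal (B : Finset (Finset ℕ)) : Prop :=
  ∀ I ∈ B, ∀ a ∈ I, I.filter (fun x => a ≤ x) ∈ B

/-- A connected component of `B`: an inclusion-maximal element. -/
def BS.IsComponent (B : Finset (Finset ℕ)) (C : Finset ℕ) : Prop :=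
  C ∈ B ∧ ∀ J ∈ B, C ⊆ J → J = C

/-- The restriction of `B` to `I` has no connected component of odd cardinality. -/
def BS.NoOddComp (B : Finset (Finset ℕ)) (I : Finset ℕ) : Prop :=
  ∀ C ∈ BS.restrict B I, BS.IsComponent (BS.restrict B I) C → Even C.card

/-- The poset `P̂_B` of subsets of `S` whose restriction has no odd component. -/
def BS.hatP (B : Finset (Finset ℕ)) (S : Finset ℕ) : Set (Finset ℕ) :=
  {I | I ⊆ S ∧ BS.NoOddComp B I}

/-- `L` is a (one-line notation) permutation of the finite set `S`. -/
def BS.IsPermOf (S : Finset ℕ) (L : List ℕ) : Prop :=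
  L.Nodup ∧ L.toFinset = S

/-- `L` is a `B`-permutation: each entry lies in the same connected component of the
restriction of `B` to the prefix as the maximum of the prefix. -/
def BS.IsBPerm (B : Finset (Finset ℕ)) (S : Finset ℕ) (L : List ℕ) : Prop :=
  BS.IsPermOf S L ∧
  ∀ i, i < L.length →
    ∃ C : Finset ℕ, BS.IsComponent (BS.restrict B (L.take (i + 1)).toFinset) C ∧
      L.getD i 0 ∈ C ∧ ∃ M ∈ C, ∀ y ∈ (L.take (i + 1)).toFinset, y ≤ M

/-- `L` is alternating: `x₁ > x₂ < x₃ > x₄ < ⋯`. -/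
def BS.IsAlternating (L : List ℕ) : Prop :=
  ∀ i, i + 1 < L.length →
    (i % 2 = 0 → L.getD (i + 1) 0 < L.getD i 0) ∧
    (i % 2 = 1 → L.getD i 0 < L.getD (i + 1) 0)

/-- The maximum of a finset of naturals, as an integer (`0` for `∅`). -/
def BS.fmax (s : Finset ℕ) : ℤ := ((WithBot.unbotD 0 s.max : ℕ) : ℤ)

/-- The minimum of a finset of naturals, as an integer (`0` for `∅`). -/
def BS.fmin (s : Finset ℕ) : ℤ := ((WithTop.untopD 0 s.min : ℕ) : ℤ)

open Classical in
/-- The connected component `𝔠(I₂;I₁)` of `B|_{I₂}` containing `I₂ \ I₁`. -/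
noncomputable def BS.comp (B : Finset (Finset ℕ)) (I₁ I₂ : Finset ℕ) : Finset ℕ :=
  (BS.restrict B I₂).sup
    (fun C => if BS.IsComponent (BS.restrict B I₂) C ∧ I₂ \ I₁ ⊆ C then C else ∅)

/-- The edge label `μ_B(I₁,I₂) = (max 𝔠(I₂;I₁), (max I₂\I₁, min I₂\I₁))`. -/
noncomputable def BS.mu (B : Finset (Finset ℕ)) (I₁ I₂ : Finset ℕ) : ℤ × ℤ × ℤ :=
  (BS.fmax (BS.comp B I₁ I₂), BS.fmax (I₂ \ I₁), BS.fmin (I₂ \ I₁))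

/-- The partial order `≥` on `Ω = ℤ × ℤ` generated by the relations `ℛ₁` and `ℛ₂`. -/
def BS.omGe (a b : ℤ × ℤ) : Prop :=
  (a.1 ≥ a.2 ∧ a.2 ≥ b.1 ∧ b.1 ≥ b.2) ∨ (a.1 = b.1 ∧ b.1 ≥ a.2 ∧ a.2 ≥ b.2)

/-- The lexicographic order `⪰` on `ℤ × Ω`. -/
def BS.labGe (a b : ℤ × ℤ × ℤ) : Prop := a.1 > b.1 ∨ (a.1 = b.1 ∧ BS.omGe a.2 b.2)

/-- Strict version `≻` of the lexicographic order on labels. -/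
def BS.labGt (a b : ℤ × ℤ × ℤ) : Prop := BS.labGe a b ∧ a ≠ b

/-- `I₂` covers `I₁` in the poset `P̂_B`. -/
def BS.Covers (B : Finset (Finset ℕ)) (S : Finset ℕ) (I₁ I₂ : Finset ℕ) : Prop :=
  I₁ ∈ BS.hatP B S ∧ I₂ ∈ BS.hatP B S ∧ I₁ ⊂ I₂ ∧
    ∀ J ∈ BS.hatP B S, I₁ ⊂ J → ¬ J ⊂ I₂

/-- `c` is a maximal chain of `P̂_B` (a saturated chain from `∅` to `S`). -/
def BS.IsMaxChain (B : Finset (Finset ℕ)) (S : Finset ℕ) (c : List (Finset ℕ)) : Prop :=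
  c.Chain' (BS.Covers B S) ∧ c.head? = some ∅ ∧ c.getLast? = some S

/-- The label sequence of `c` has a decreasing position at (zero-based) index `i`. -/
noncomputable def BS.DecAt (B : Finset (Finset ℕ)) (c : List (Finset ℕ)) (i : ℕ) : Prop :=
  i + 2 < c.length ∧
    BS.labGt (BS.mu B (c.getD i ∅) (c.getD (i + 1) ∅))
      (BS.mu B (c.getD (i + 1) ∅) (c.getD (i + 2) ∅))

/-- `c` is a maximal (saturated) chain of the interval `[x,y]` in `P̂_B`. -/
def BS.IsMaxChainOn (B : Finset (Finset ℕ)) (S : Finset ℕ) (x y : Finset ℕ)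
    (c : List (Finset ℕ)) : Prop :=
  c.Chain' (BS.Covers B S) ∧ c.head? = some x ∧ c.getLast? = some y

/-- The label sequence `μ_B(c)` is (weakly) decreasing. -/
noncomputable def BS.IsDecSeq (B : Finset (Finset ℕ)) (c : List (Finset ℕ)) : Prop :=
  ∀ i, i + 2 < c.length →
    BS.labGe (BS.mu B (c.getD i ∅) (c.getD (i + 1) ∅))
      (BS.mu B (c.getD (i + 1) ∅) (c.getD (i + 2) ∅))

/-- `μ_B(c)` lexicographically succeeds `μ_B(c')`. -/
noncomputable def BS.LexSucc (B : Finset (Finset ℕ)) (c c' : List (Finset ℕ)) : Prop :=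
  ∃ i, i + 1 < c.length ∧
    (∀ j < i, BS.mu B (c.getD j ∅) (c.getD (j + 1) ∅)
      = BS.mu B (c'.getD j ∅) (c'.getD (j + 1) ∅)) ∧
    BS.labGt (BS.mu B (c.getD i ∅) (c.getD (i + 1) ∅))
      (BS.mu B (c'.getD i ∅) (c'.getD (i + 1) ∅))

/-!
The decreasing chain of `[x, y]` is built greedily. By parity of components every cover in
`P̂_B` adds exactly two elements. From `x`, take the component `C` of `B|_y` not inside `x`
with the largest maximum and add the two largest elements `a > b` of `C \ x`; chordality puts
the suffix `{i ∈ C | b ≤ i}` into `B`, and it joins `a` and `b` inside `x ∪ {a, b}`, which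
therefore lies in `P̂_B`, with label `(max C, (a, b))`. Comparing labels, the greedy cover has
the strictly largest label among the covers of `x` below `y`, consecutive greedy labels
decrease, and a non-greedy first step is never followed by a weakly smaller label. Induction
along the chain gives existence, uniqueness and lexicographic maximality of the decreasing
chain.
-/

namespace BS

variable {S : Finset ℕ} {B : Finset (Finset ℕ)}

lemma mem_restrict {I D : Finset ℕ} : D ∈ restrict B I ↔ D ∈ B ∧ D ⊆ I :=
  Finset.mem_filter

lemma IsComponent.mem_and_subset {I C : Finset ℕ} (hC : IsComponent (restrict B I) C) :
    C ∈ B ∧ C ⊆ I :=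
  mem_restrict.mp hC.1

lemma IsComponent.nonempty (hB : IsBuilding S B) {I C : Finset ℕ}
    (hC : IsComponent (restrict B I) C) : C.Nonempty :=
  (hB.1 C hC.mem_and_subset.1).2

lemma IsComponent.subset_of_inter_nonempty (hB : IsBuilding S B) {I C D : Finset ℕ}
    (hC : IsComponent (restrict B I) C) (hD : D ∈ restrict B I) (h : (D ∩ C).Nonempty) :
    D ⊆ C := by
  obtain ⟨hDB, hDI⟩ := mem_restrict.mp hD
  obtain ⟨hCB, hCI⟩ := hC.mem_and_subset
  have hunion : D ∪ C ∈ restrict B I :=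
    mem_restrict.mpr ⟨hB.2.2 D hDB C hCB h, Finset.union_subset hDI hCI⟩
  rw [← hC.2 _ hunion Finset.subset_union_right]
  exact Finset.subset_union_left

lemma IsComponent.eq_of_inter_nonempty (hB : IsBuilding S B) {I C C' : Finset ℕ}
    (hC : IsComponent (restrict B I) C) (hC' : IsComponent (restrict B I) C')
    (h : (C ∩ C').Nonempty) : C = C' :=
  hC'.2 C hC.1 (hC.subset_of_inter_nonempty hB hC'.1 (Finset.inter_comm C C' ▸ h))

lemma exists_isComponent_superset {I D : Finset ℕ} (hD : D ∈ restrict B I) :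
    ∃ C, IsComponent (restrict B I) C ∧ D ⊆ C := by
  obtain ⟨C, hDC, hC⟩ := (restrict B I).exists_le_maximal hD
  exact ⟨C, ⟨hC.1, fun J hJ hCJ => le_antisymm (hC.2 hJ hCJ) hCJ⟩, hDC⟩

lemma exists_isComponent_mem (hB : IsBuilding S B) {I : Finset ℕ} (hI : I ⊆ S) {i : ℕ}
    (hi : i ∈ I) : ∃ C, IsComponent (restrict B I) C ∧ i ∈ C := by
  obtain ⟨C, hC, hiC⟩ := exists_isComponent_superset
    (mem_restrict.mpr ⟨hB.2.1 i (hI hi), Finset.singleton_subset_iff.mpr hi⟩)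
  exact ⟨C, hC, hiC (Finset.mem_singleton_self i)⟩

lemma fmax_eq {s : Finset ℕ} {m : ℕ} (hm : m ∈ s) (h : ∀ i ∈ s, i ≤ m) :
    fmax s = m := by
  have : s.max = m :=
    le_antisymm (Finset.max_le fun i hi => WithBot.coe_le_coe.mpr (h i hi)) (Finset.le_max hm)
  simp [fmax, this]

lemma fmax_eq_max' {s : Finset ℕ} (hs : s.Nonempty) : fmax s = s.max' hs :=
  fmax_eq (s.max'_mem hs) fun i hi => s.le_max' i hi

lemma fmax_mono {s t : Finset ℕ} (hs : s.Nonempty) (h : s ⊆ t) : fmax s ≤ fmax t := by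
  rw [fmax_eq_max' hs, fmax_eq_max' (hs.mono h)]
  exact_mod_cast Finset.max'_subset hs h

lemma fmax_pair {a b : ℕ} (h : b < a) : fmax {a, b} = a :=
  fmax_eq (by simp) (by simp [h.le])

lemma fmin_pair {a b : ℕ} (h : b < a) : fmin {a, b} = b := by
  rw [fmin, Finset.min_insert, Finset.min_singleton, min_eq_right (WithTop.coe_le_coe.mpr h.le)]
  rfl

lemma IsComponent.eq_of_fmax_eq (hB : IsBuilding S B) {I C C' : Finset ℕ}
    (hC : IsComponent (restrict B I) C) (hC' : IsComponent (restrict B I) C')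
    (h : fmax C = fmax C') : C = C' := by
  have hne := hC.nonempty hB
  have hne' := hC'.nonempty hB
  rw [fmax_eq_max' hne, fmax_eq_max' hne', Nat.cast_inj] at h
  exact hC.eq_of_inter_nonempty hB hC'
    ⟨_, Finset.mem_inter.mpr ⟨C.max'_mem hne, h ▸ C'.max'_mem hne'⟩⟩

lemma even_card_of_forall_mem_isComponent_subset (hB : IsBuilding S B) {I T : Finset ℕ}
    (hI : NoOddComp B I)
    (hT : ∀ i ∈ T, ∃ L, IsComponent (restrict B I) L ∧ i ∈ L ∧ L ⊆ T) :
    Even T.card := by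
  classical
  set K := (restrict B I).filter fun L => IsComponent (restrict B I) L ∧ L ⊆ T
  have hT_eq : T = K.biUnion id := by
    ext i
    simp only [Finset.mem_biUnion, Finset.mem_filter, id, K]
    refine ⟨fun hi => ?_, fun ⟨L, ⟨_, _, hLT⟩, hiL⟩ => hLT hiL⟩
    obtain ⟨L, hL, hiL, hLT⟩ := hT i hi
    exact ⟨L, ⟨hL.1, hL, hLT⟩, hiL⟩
  have hdisj : (K : Set (Finset ℕ)).PairwiseDisjoint id := by
    intro L hL L' hL' hne
    obtain ⟨-, hL, -⟩ := Finset.mem_filter.mp (Finset.mem_coe.mp hL)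
    obtain ⟨-, hL', -⟩ := Finset.mem_filter.mp (Finset.mem_coe.mp hL')
    exact Finset.disjoint_iff_inter_eq_empty.mpr <| Finset.not_nonempty_iff_eq_empty.mp
      fun h => hne (hL.eq_of_inter_nonempty hB hL' h)
  rw [hT_eq, Finset.card_biUnion hdisj]
  exact Finset.even_sum _ fun L hL => hI L (Finset.mem_filter.mp hL).1 (Finset.mem_filter.mp hL).2.1

lemma even_card_of_mem_hatP (hB : IsBuilding S B) {I : Finset ℕ} (hI : I ∈ hatP B S) :
    Even I.card :=
  even_card_of_forall_mem_isComponent_subset hB hI.2 fun i hi => by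
    obtain ⟨L, hL, hiL⟩ := exists_isComponent_mem hB hI.1 hi
    exact ⟨L, hL, hiL, hL.mem_and_subset.2⟩

lemma even_card_inter_of_isComponent (hB : IsBuilding S B) {x z K : Finset ℕ}
    (hx : x ∈ hatP B S) (hxz : x ⊆ z) (hK : IsComponent (restrict B z) K) :
    Even (K ∩ x).card :=
  even_card_of_forall_mem_isComponent_subset hB hx.2 fun i hi => by
    obtain ⟨hiK, hix⟩ := Finset.mem_inter.mp hi
    obtain ⟨L, hL, hiL⟩ := exists_isComponent_mem hB hx.1 hix
    obtain ⟨hLB, hLx⟩ := hL.mem_and_subset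
    have hLK : L ⊆ K := hK.subset_of_inter_nonempty hB (mem_restrict.mpr ⟨hLB, hLx.trans hxz⟩)
      ⟨i, Finset.mem_inter.mpr ⟨hiL, hiK⟩⟩
    exact ⟨L, hL, hiL, Finset.subset_inter hLK hLx⟩

lemma even_card_iff_even_card_sdiff (hB : IsBuilding S B) {x z K : Finset ℕ}
    (hx : x ∈ hatP B S) (hxz : x ⊆ z) (hK : IsComponent (restrict B z) K) :
    Even K.card ↔ Even (K \ x).card := by
  rw [← Finset.card_sdiff_add_card_inter K x, Nat.even_add]
  simp [even_card_inter_of_isComponent hB hx hxz hK]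

lemma union_pair_sdiff_cancel_left {x : Finset ℕ} {a b : ℕ} (hax : a ∉ x) (hbx : b ∉ x) :
    (x ∪ {a, b}) \ x = {a, b} :=
  Finset.union_sdiff_cancel_left (by simp [Finset.disjoint_insert_right, hax, hbx])

lemma union_pair_mem_hatP (hB : IsBuilding S B) {x D : Finset ℕ} (hx : x ∈ hatP B S)
    {a b : ℕ} (hab : {a, b} ⊆ S) (hax : a ∉ x) (hbx : b ∉ x) (hne : a ≠ b) (hD : D ∈ B)
    (hDsub : D ⊆ x ∪ {a, b}) (haD : a ∈ D) (hbD : b ∈ D) : x ∪ {a, b} ∈ hatP B S := by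
  refine ⟨Finset.union_subset hx.1 hab, fun K _ hK => ?_⟩
  rw [even_card_iff_even_card_sdiff hB hx Finset.subset_union_left hK]
  have hKab : K \ x ⊆ {a, b} := sdiff_le_iff.mpr hK.mem_and_subset.2
  have hDK (h : (D ∩ K).Nonempty) : D ⊆ K :=
    hK.subset_of_inter_nonempty hB (mem_restrict.mpr ⟨hD, hDsub⟩) h
  by_cases haK : a ∈ K
  · have hbK : b ∈ K := hDK ⟨a, Finset.mem_inter.mpr ⟨haD, haK⟩⟩ hbD
    have : K \ x = {a, b} := Finset.Subset.antisymm hKab <| by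
      simp [Finset.insert_subset_iff, haK, hbK, hax, hbx]
    simp [this, Finset.card_pair hne]
  · have hbK : b ∉ K := fun hbK => haK (hDK ⟨b, Finset.mem_inter.mpr ⟨hbD, hbK⟩⟩ haD)
    have : K \ x = ∅ := Finset.subset_empty.mp fun i hi => by
      have := hKab hi
      simp only [Finset.mem_insert, Finset.mem_singleton] at this
      rcases this with rfl | rfl <;> simp_all
    simp [this]

lemma exists_isComponent_mem_pair (hB : IsBuilding S B) {x : Finset ℕ} (hx : x ∈ hatP B S)
    {a b : ℕ} (hax : a ∉ x) (hz : x ∪ {a, b} ∈ hatP B S) :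
    ∃ K, IsComponent (restrict B (x ∪ {a, b})) K ∧ a ∈ K ∧ b ∈ K := by
  obtain ⟨K, hK, haK⟩ := exists_isComponent_mem hB hz.1 (by simp : a ∈ x ∪ {a, b})
  refine ⟨K, hK, haK, by_contra fun hbK => ?_⟩
  have : K \ x = {a} := Finset.Subset.antisymm
    (fun i hi => by
      have : i ∈ ({a, b} : Finset ℕ) := sdiff_le_iff.mpr hK.mem_and_subset.2 hi
      simp only [Finset.mem_insert, Finset.mem_singleton] at this
      rcases this with rfl | rfl <;> simp_all)
    (by simp [haK, hax])
  have heven := (even_card_iff_even_card_sdiff hB hx Finset.subset_union_left hK).mp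
    (hz.2 K hK.1 hK)
  simp [this] at heven

lemma comp_eq (hB : IsBuilding S B) {x z K : Finset ℕ} (hne : (z \ x).Nonempty)
    (hK : IsComponent (restrict B z) K) (hzx : z \ x ⊆ K) : comp B x z = K := by
  unfold comp
  refine le_antisymm (Finset.sup_le fun C _ => ?_) (le_trans ?_ (Finset.le_sup hK.1))
  · split_ifs with h
    · exact (h.1.eq_of_inter_nonempty hB hK (hne.mono (Finset.subset_inter h.2 hzx))).le
    · exact Finset.empty_subset K
  · rw [if_pos ⟨hK, hzx⟩]

lemma mu_union_pair (hB : IsBuilding S B) {x K : Finset ℕ} {a b : ℕ} (hax : a ∉ x)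
    (hbx : b ∉ x) (hba : b < a) (hK : IsComponent (restrict B (x ∪ {a, b})) K)
    (haK : a ∈ K) (hbK : b ∈ K) : mu B x (x ∪ {a, b}) = (fmax K, (a : ℤ), (b : ℤ)) := by
  have hsd := union_pair_sdiff_cancel_left hax hbx
  have hcomp : comp B x (x ∪ {a, b}) = K :=
    comp_eq hB (by rw [hsd]; simp) hK (by rw [hsd]; simp [Finset.insert_subset_iff, haK, hbK])
  rw [mu, hcomp, hsd, fmax_pair hba, fmin_pair hba]

lemma covers_of_card_sdiff_eq_two (hB : IsBuilding S B) {x z : Finset ℕ}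
    (hx : x ∈ hatP B S) (hz : z ∈ hatP B S) (hxz : x ⊂ z) (hcard : (z \ x).card = 2) :
    Covers B S x z := by
  refine ⟨hx, hz, hxz, fun J hJ hxJ hJz => ?_⟩
  have h₁ := Finset.card_lt_card hxJ
  have h₂ := Finset.card_lt_card hJz
  have h₃ := Finset.card_sdiff_add_card_eq_card hxz.1
  obtain ⟨p, hp⟩ := even_card_of_mem_hatP hB hx
  obtain ⟨q, hq⟩ := even_card_of_mem_hatP hB hJ
  omega

structure IsTopTwo (s : Finset ℕ) (a b : ℕ) : Prop where
  fst_mem : a ∈ s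
  snd_mem : b ∈ s
  snd_lt_fst : b < a
  eq_fst_or_le_snd : ∀ i ∈ s, i = a ∨ i ≤ b

lemma exists_isTopTwo {s : Finset ℕ} (hs : 2 ≤ s.card) : ∃ a b, IsTopTwo s a b := by
  have hs₀ : s.Nonempty := Finset.card_pos.mp (by omega)
  set a := s.max' hs₀
  have hs₁ : (s.erase a).Nonempty := by
    rw [← Finset.card_pos, Finset.card_erase_of_mem (s.max'_mem hs₀)]; omega
  set b := (s.erase a).max' hs₁
  have hb : b ∈ s.erase a := (s.erase a).max'_mem hs₁
  refine ⟨a, b, ⟨s.max'_mem hs₀, Finset.mem_of_mem_erase hb,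
    lt_of_le_of_ne (s.le_max' b (Finset.mem_of_mem_erase hb)) (Finset.ne_of_mem_erase hb),
    fun i hi => or_iff_not_imp_left.mpr fun hia => ?_⟩⟩
  exact (s.erase a).le_max' i (Finset.mem_erase.mpr ⟨hia, hi⟩)

namespace IsTopTwo

variable {s : Finset ℕ} {a b a' b' : ℕ}

lemma unique (h : IsTopTwo s a b) (h' : IsTopTwo s a' b') : a = a' ∧ b = b' := by
  have := h.eq_fst_or_le_snd a' h'.fst_mem
  have := h.eq_fst_or_le_snd b' h'.snd_mem
  have := h'.eq_fst_or_le_snd a h.fst_mem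
  have := h'.eq_fst_or_le_snd b h.snd_mem
  have := h.snd_lt_fst
  have := h'.snd_lt_fst
  omega

lemma omGe_of_mem (h : IsTopTwo s a b) (ha' : a' ∈ s) (hb' : b' ∈ s) (hba' : b' < a') :
    omGe ((a : ℤ), (b : ℤ)) ((a' : ℤ), (b' : ℤ)) := by
  have := h.eq_fst_or_le_snd a' ha'
  have := h.eq_fst_or_le_snd b' hb'
  have := h.snd_lt_fst
  unfold BS.omGe
  omega

lemma not_omGe_of_sdiff {a₂ b₂ : ℕ} (h : IsTopTwo s a b)
    (h₂ : IsTopTwo (s \ {a', b'}) a₂ b₂) (ha' : a' ∈ s) (hb' : b' ∈ s) (hba' : b' < a')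
    (hne : ¬(a' = a ∧ b' = b)) :
    ¬ omGe ((a' : ℤ), (b' : ℤ)) ((a₂ : ℤ), (b₂ : ℤ)) := by
  have ha₂ := h₂.fst_mem
  have hmax₂ := h₂.eq_fst_or_le_snd
  simp only [Finset.mem_sdiff, Finset.mem_insert, Finset.mem_singleton, not_or] at ha₂ hmax₂
  have := h.eq_fst_or_le_snd a' ha'
  have := h.eq_fst_or_le_snd b' hb'
  have := fun h₁ h₂ => hmax₂ a ⟨h.fst_mem, h₁, h₂⟩
  have := fun h₁ h₂ => hmax₂ b ⟨h.snd_mem, h₁, h₂⟩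
  have := h.snd_lt_fst
  have := h₂.snd_lt_fst
  -- `a` or `b` survives in `s \ {a', b'}` and exceeds `b'`, so `b' < a₂`; and `a₂ ≠ a'`.
  unfold BS.omGe
  omega

end IsTopTwo

structure IsGreedyChoice (B : Finset (Finset ℕ)) (x y C : Finset ℕ) (a b : ℕ) : Prop where
  isComponent : IsComponent (restrict B y) C
  fmax_le : ∀ C', IsComponent (restrict B y) C' → (C' \ x).Nonempty → fmax C' ≤ fmax C
  isTopTwo : IsTopTwo (C \ x) a b

lemma two_le_card_sdiff_of_isComponent (hB : IsBuilding S B) {x y C : Finset ℕ}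
    (hx : x ∈ hatP B S) (hy : y ∈ hatP B S) (hxy : x ⊆ y) (hC : IsComponent (restrict B y) C)
    (hCx : (C \ x).Nonempty) : 2 ≤ (C \ x).card := by
  obtain ⟨k, hk⟩ := (even_card_iff_even_card_sdiff hB hx hxy hC).mp (hy.2 C hC.1 hC)
  have := hCx.card_pos
  omega

lemma exists_isGreedyChoice (hB : IsBuilding S B) {x y : Finset ℕ} (hx : x ∈ hatP B S)
    (hy : y ∈ hatP B S) (hxy : x ⊂ y) : ∃ C a b, IsGreedyChoice B x y C a b := by
  classical
  obtain ⟨w, hwy, hwx⟩ := Finset.exists_of_ssubset hxy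
  obtain ⟨C₀, hC₀, hwC₀⟩ := exists_isComponent_mem hB hy.1 hwy
  obtain ⟨C, hC, hCmax⟩ := Finset.exists_max_image
    ((restrict B y).filter fun C => IsComponent (restrict B y) C ∧ (C \ x).Nonempty) fmax
    ⟨C₀, Finset.mem_filter.mpr ⟨hC₀.1, hC₀, w, Finset.mem_sdiff.mpr ⟨hwC₀, hwx⟩⟩⟩
  obtain ⟨-, hC, hCx⟩ := Finset.mem_filter.mp hC
  obtain ⟨a, b, hab⟩ := exists_isTopTwo (two_le_card_sdiff_of_isComponent hB hx hy hxy.1 hC hCx)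
  exact ⟨C, a, b, hC,
    fun C' hC' hC'x => hCmax C' (Finset.mem_filter.mpr ⟨hC'.1, hC', hC'x⟩), hab⟩

namespace IsGreedyChoice

variable {x y C : Finset ℕ} {a b : ℕ}

lemma fst_mem (h : IsGreedyChoice B x y C a b) : a ∈ C ∧ a ∉ x :=
  Finset.mem_sdiff.mp h.isTopTwo.fst_mem

lemma snd_mem (h : IsGreedyChoice B x y C a b) : b ∈ C ∧ b ∉ x :=
  Finset.mem_sdiff.mp h.isTopTwo.snd_mem

lemma union_subset (h : IsGreedyChoice B x y C a b) (hxy : x ⊆ y) : x ∪ {a, b} ⊆ y := by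
  have hCy := h.isComponent.mem_and_subset.2
  exact Finset.union_subset hxy (Finset.insert_subset (hCy h.fst_mem.1)
    (Finset.singleton_subset_iff.mpr (hCy h.snd_mem.1)))

lemma filter_le_subset (h : IsGreedyChoice B x y C a b) :
    C.filter (b ≤ ·) ⊆ x ∪ {a, b} := by
  intro i hi
  obtain ⟨hiC, hbi⟩ := Finset.mem_filter.mp hi
  by_cases hix : i ∈ x
  · exact Finset.mem_union_left _ hix
  · rcases h.isTopTwo.eq_fst_or_le_snd i (Finset.mem_sdiff.mpr ⟨hiC, hix⟩) with rfl | hib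
    · simp
    · simp [le_antisymm hib hbi]

lemma filter_le_mem (hc : IsChordal B) (h : IsGreedyChoice B x y C a b) :
    C.filter (b ≤ ·) ∈ B :=
  hc C h.isComponent.mem_and_subset.1 b h.snd_mem.1

/-- The chordal suffix `{i ∈ C | b ≤ i}` joins `a` and `b` inside `x ∪ {a, b}`. -/
lemma union_mem_hatP (hB : IsBuilding S B) (hc : IsChordal B) (h : IsGreedyChoice B x y C a b)
    (hx : x ∈ hatP B S) (hy : y ∈ hatP B S) : x ∪ {a, b} ∈ hatP B S := by
  have hCS := h.isComponent.mem_and_subset.2.trans hy.1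
  exact union_pair_mem_hatP hB hx (Finset.insert_subset (hCS h.fst_mem.1)
    (Finset.singleton_subset_iff.mpr (hCS h.snd_mem.1))) h.fst_mem.2 h.snd_mem.2
    h.isTopTwo.snd_lt_fst.ne' (h.filter_le_mem hc) h.filter_le_subset
    (Finset.mem_filter.mpr ⟨h.fst_mem.1, h.isTopTwo.snd_lt_fst.le⟩)
    (Finset.mem_filter.mpr ⟨h.snd_mem.1, le_rfl⟩)

lemma card_sdiff (h : IsGreedyChoice B x y C a b) : ((x ∪ {a, b}) \ x).card = 2 := by
  rw [union_pair_sdiff_cancel_left h.fst_mem.2 h.snd_mem.2,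
    Finset.card_pair h.isTopTwo.snd_lt_fst.ne']

lemma covers (hB : IsBuilding S B) (hc : IsChordal B) (h : IsGreedyChoice B x y C a b)
    (hx : x ∈ hatP B S) (hy : y ∈ hatP B S) : Covers B S x (x ∪ {a, b}) := by
  refine covers_of_card_sdiff_eq_two hB hx (h.union_mem_hatP hB hc hx hy) ?_ h.card_sdiff
  exact Finset.ssubset_iff_of_subset Finset.subset_union_left |>.mpr ⟨a, by simp, h.fst_mem.2⟩

lemma mu_eq (hB : IsBuilding S B) (hc : IsChordal B) (h : IsGreedyChoice B x y C a b)
    (hx : x ∈ hatP B S) (hy : y ∈ hatP B S) (hxy : x ⊆ y) :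
    mu B x (x ∪ {a, b}) = (fmax C, (a : ℤ), (b : ℤ)) := by
  obtain ⟨haC, hax⟩ := h.fst_mem
  obtain ⟨hbC, hbx⟩ := h.snd_mem
  obtain ⟨K, hK, haK, hbK⟩ :=
    exists_isComponent_mem_pair hB hx hax (h.union_mem_hatP hB hc hx hy)
  obtain ⟨hKB, hKz⟩ := hK.mem_and_subset
  have hKC : K ⊆ C := h.isComponent.subset_of_inter_nonempty hB
    (mem_restrict.mpr ⟨hKB, hKz.trans (h.union_subset hxy)⟩)
    ⟨a, Finset.mem_inter.mpr ⟨haK, haC⟩⟩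
  have hDK : C.filter (b ≤ ·) ⊆ K := hK.subset_of_inter_nonempty hB
    (mem_restrict.mpr ⟨h.filter_le_mem hc, h.filter_le_subset⟩)
    ⟨a, Finset.mem_inter.mpr
      ⟨Finset.mem_filter.mpr ⟨haC, h.isTopTwo.snd_lt_fst.le⟩, haK⟩⟩
  have hC₀ : C.Nonempty := ⟨a, haC⟩
  have hmaxK : C.max' hC₀ ∈ K :=
    hDK (Finset.mem_filter.mpr ⟨C.max'_mem hC₀, C.le_max' b hbC⟩)
  have hfmax : fmax K = fmax C := le_antisymm (fmax_mono ⟨a, haK⟩ hKC) <| by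
    rw [fmax_eq_max' hC₀, fmax_eq_max' ⟨a, haK⟩]
    exact_mod_cast K.le_max' _ hmaxK
  rw [mu_union_pair hB hax hbx h.isTopTwo.snd_lt_fst hK haK hbK, hfmax]

end IsGreedyChoice

section

variable {x y : Finset ℕ}

lemma Covers.left_mem {w : Finset ℕ} (hcov : Covers B S x w) : x ∈ hatP B S :=
  hcov.1

lemma Covers.ssubset {w : Finset ℕ} (hcov : Covers B S x w) : x ⊂ w :=
  hcov.2.2.1

lemma Covers.right_mem {w : Finset ℕ} (hcov : Covers B S x w) : w ∈ hatP B S :=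
  hcov.2.1

lemma Covers.eq_of_subset {w z : Finset ℕ} (hw : Covers B S x w) (hz : Covers B S x z)
    (hzw : z ⊆ w) : z = w :=
  by_contra fun hne =>
    hw.2.2.2 z hz.right_mem hz.ssubset (Finset.ssubset_iff_subset_ne.mpr ⟨hzw, hne⟩)

/-- A cover `w` of `x` contains the greedy step from `x` towards `w`, hence equals it. -/
lemma Covers.card_sdiff (hB : IsBuilding S B) (hc : IsChordal B) {w : Finset ℕ}
    (hcov : Covers B S x w) : (w \ x).card = 2 := by
  obtain ⟨C, a, b, h⟩ := exists_isGreedyChoice hB hcov.left_mem hcov.right_mem hcov.ssubset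
  rw [← hcov.eq_of_subset (h.covers hB hc hcov.left_mem hcov.right_mem)
    (h.union_subset hcov.ssubset.le), h.card_sdiff]

lemma Covers.exists_label (hB : IsBuilding S B) (hc : IsChordal B) {w : Finset ℕ}
    (hcov : Covers B S x w) (hwy : w ⊆ y) :
    ∃ C' a' b' k, IsComponent (restrict B y) C' ∧ a' ∈ C' \ x ∧ b' ∈ C' \ x ∧ b' < a' ∧
      w = x ∪ {a', b'} ∧ mu B x w = (k, (a' : ℤ), (b' : ℤ)) ∧ k ≤ fmax C' := by
  obtain ⟨p, q, hpq, hsd⟩ := Finset.card_eq_two.mp (hcov.card_sdiff hB hc)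
  obtain ⟨a', b', hba', hsd'⟩ : ∃ a' b' : ℕ, b' < a' ∧ w \ x = {a', b'} := by
    rcases hpq.lt_or_gt with h | h
    · exact ⟨q, p, h, hsd.trans (Finset.pair_comm p q)⟩
    · exact ⟨p, q, h, hsd⟩
  have ha'w : a' ∈ w \ x := by simp [hsd']
  have hb'w : b' ∈ w \ x := by simp [hsd']
  rw [Finset.mem_sdiff] at ha'w hb'w
  have hw : w = x ∪ {a', b'} := by rw [← hsd', Finset.union_sdiff_of_subset hcov.ssubset.1]
  rw [hw] at hcov ⊢
  obtain ⟨K, hK, ha'K, hb'K⟩ :=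
    exists_isComponent_mem_pair hB hcov.left_mem ha'w.2 hcov.right_mem
  obtain ⟨hKB, hKw⟩ := hK.mem_and_subset
  obtain ⟨C', hC', hKC'⟩ :=
    exists_isComponent_superset (mem_restrict.mpr ⟨hKB, hKw.trans (hw ▸ hwy)⟩)
  exact ⟨C', a', b', fmax K, hC', Finset.mem_sdiff.mpr ⟨hKC' ha'K, ha'w.2⟩,
    Finset.mem_sdiff.mpr ⟨hKC' hb'K, hb'w.2⟩, hba', rfl,
    mu_union_pair hB ha'w.2 hb'w.2 hba' hK ha'K hb'K, fmax_mono ⟨a', ha'K⟩ hKC'⟩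

/-- The step from `x` towards `y` taken by the decreasing chain of `[x, y]`. -/
def GreedyStep (B : Finset (Finset ℕ)) (y x z : Finset ℕ) : Prop :=
  ∃ C a b, IsGreedyChoice B x y C a b ∧ z = x ∪ {a, b}

lemma exists_greedyStep (hB : IsBuilding S B) (hx : x ∈ hatP B S) (hy : y ∈ hatP B S)
    (hxy : x ⊂ y) : ∃ z, GreedyStep B y x z := by
  obtain ⟨C, a, b, h⟩ := exists_isGreedyChoice hB hx hy hxy
  exact ⟨_, C, a, b, h, rfl⟩

namespace GreedyStep

variable {z : Finset ℕ}

lemma covers (hB : IsBuilding S B) (hc : IsChordal B) (hx : x ∈ hatP B S) (hy : y ∈ hatP B S)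
    (h : GreedyStep B y x z) : Covers B S x z := by
  obtain ⟨C, a, b, h, rfl⟩ := h
  exact h.covers hB hc hx hy

lemma subset (hxy : x ⊆ y) (h : GreedyStep B y x z) : z ⊆ y := by
  obtain ⟨C, a, b, h, rfl⟩ := h
  exact h.union_subset hxy

lemma unique (hB : IsBuilding S B) {z' : Finset ℕ} (h : GreedyStep B y x z)
    (h' : GreedyStep B y x z') : z = z' := by
  obtain ⟨C, a, b, h, rfl⟩ := h
  obtain ⟨C', a', b', h', rfl⟩ := h'
  obtain rfl : C = C' := h.isComponent.eq_of_fmax_eq hB h'.isComponent <| le_antisymm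
    (h'.fmax_le C h.isComponent ⟨a, h.isTopTwo.fst_mem⟩)
    (h.fmax_le C' h'.isComponent ⟨a', h'.isTopTwo.fst_mem⟩)
  obtain ⟨rfl, rfl⟩ := h.isTopTwo.unique h'.isTopTwo
  rfl

lemma labGt_mu (hB : IsBuilding S B) (hc : IsChordal B) (hx : x ∈ hatP B S)
    (hy : y ∈ hatP B S) (hxy : x ⊆ y) (h : GreedyStep B y x z) {w : Finset ℕ}
    (hcov : Covers B S x w) (hwy : w ⊆ y) (hwz : w ≠ z) : labGt (mu B x z) (mu B x w) := by
  obtain ⟨C, a, b, h, rfl⟩ := h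
  obtain ⟨C', a', b', k, hC', ha', hb', hba', rfl, hmu, hk⟩ := hcov.exists_label hB hc hwy
  have hC'C : fmax C' ≤ fmax C := h.fmax_le C' hC' ⟨a', ha'⟩
  rw [h.mu_eq hB hc hx hy hxy, hmu]
  rcases (hk.trans hC'C).lt_or_eq with hlt | heq
  · exact ⟨Or.inl hlt, fun he => hlt.ne (congrArg Prod.fst he).symm⟩
  · obtain rfl : C' = C := hC'.eq_of_fmax_eq hB h.isComponent (le_antisymm hC'C (heq ▸ hk))
    refine ⟨Or.inr ⟨heq.symm, h.isTopTwo.omGe_of_mem ha' hb' hba'⟩, fun he => hwz ?_⟩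
    simp only [Prod.mk.injEq, Nat.cast_inj] at he
    rw [he.2.1, he.2.2]

lemma labGe_mu (hB : IsBuilding S B) (hc : IsChordal B) (hx : x ∈ hatP B S)
    (hy : y ∈ hatP B S) (hxy : x ⊆ y) (h : GreedyStep B y x z) {z' : Finset ℕ}
    (h' : GreedyStep B y z z') : labGe (mu B x z) (mu B z z') := by
  obtain ⟨C, a, b, h, rfl⟩ := h
  obtain ⟨C₂, a₂, b₂, h₂, rfl⟩ := h'
  rw [h.mu_eq hB hc hx hy hxy,
    h₂.mu_eq hB hc (h.union_mem_hatP hB hc hx hy) hy (h.union_subset hxy)]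
  have hsub : C₂ \ (x ∪ {a, b}) ⊆ C₂ \ x :=
    Finset.sdiff_subset_sdiff le_rfl Finset.subset_union_left
  have hC₂C : fmax C₂ ≤ fmax C :=
    h.fmax_le C₂ h₂.isComponent ⟨a₂, hsub h₂.isTopTwo.fst_mem⟩
  by_cases hCC₂ : C₂ = C
  · subst hCC₂
    exact Or.inr ⟨rfl, h.isTopTwo.omGe_of_mem (hsub h₂.isTopTwo.fst_mem)
      (hsub h₂.isTopTwo.snd_mem) h₂.isTopTwo.snd_lt_fst⟩
  · exact Or.inl <| hC₂C.lt_of_ne fun he =>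
      hCC₂ (h₂.isComponent.eq_of_fmax_eq hB h.isComponent he)

/-- The components chosen at `x` and at `u` coincide, since the greedy pair of `x` is not used
up by `u`; then compare the pairs inside that component. -/
lemma not_labGe_mu (hB : IsBuilding S B) (hc : IsChordal B) (hy : y ∈ hatP B S)
    (h : GreedyStep B y x z) {u u' : Finset ℕ} (hcov : Covers B S x u) (huy : u ⊆ y)
    (huz : u ≠ z) (h' : GreedyStep B y u u') : ¬ labGe (mu B x u) (mu B u u') := by
  obtain ⟨C, a, b, h, rfl⟩ := h
  obtain ⟨C₂, a₂, b₂, h₂, rfl⟩ := h'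
  rw [h₂.mu_eq hB hc hcov.right_mem hy huy]
  obtain ⟨C', a', b', k, hC', ha', hb', hba', rfl, hmu, hk⟩ := hcov.exists_label hB hc huy
  rw [hmu]
  have hne : ¬(a' = a ∧ b' = b) := fun ⟨ha, hb⟩ => huz (by rw [ha, hb])
  have hsd (D : Finset ℕ) : D \ (x ∪ {a', b'}) = (D \ x) \ {a', b'} := sdiff_sdiff_left.symm
  have hCu : (C \ (x ∪ {a', b'})).Nonempty := by
    have := h.isTopTwo.snd_lt_fst
    have : a ∉ ({a', b'} : Finset ℕ) ∨ b ∉ ({a', b'} : Finset ℕ) := by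
      simp only [Finset.mem_insert, Finset.mem_singleton]; omega
    rw [hsd]
    rcases this with h' | h'
    · exact ⟨a, Finset.mem_sdiff.mpr ⟨h.isTopTwo.fst_mem, h'⟩⟩
    · exact ⟨b, Finset.mem_sdiff.mpr ⟨h.isTopTwo.snd_mem, h'⟩⟩
  have hC₂C : fmax C₂ ≤ fmax C := h.fmax_le C₂ h₂.isComponent
    ⟨a₂, Finset.sdiff_subset_sdiff le_rfl Finset.subset_union_left h₂.isTopTwo.fst_mem⟩
  obtain rfl : C₂ = C := h₂.isComponent.eq_of_fmax_eq hB h.isComponent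
    (le_antisymm hC₂C (h₂.fmax_le C h.isComponent hCu))
  have hC'C : fmax C' ≤ fmax C₂ := h.fmax_le C' hC' ⟨a', ha'⟩
  rintro (hlt | ⟨heq, hom⟩)
  · exact absurd (hk.trans hC'C) (not_le.mpr hlt)
  · change k = fmax C₂ at heq
    obtain rfl : C' = C₂ := hC'.eq_of_fmax_eq hB h₂.isComponent (le_antisymm hC'C (heq ▸ hk))
    exact h.isTopTwo.not_omGe_of_sdiff (hsd _ ▸ h₂.isTopTwo) ha' hb' hba' hne hom

end GreedyStep

lemma not_isMaxChainOn_nil : ¬ IsMaxChainOn B S x y [] := by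
  simp [IsMaxChainOn]

lemma isMaxChainOn_singleton {w : Finset ℕ} : IsMaxChainOn B S x y [w] ↔ w = x ∧ x = y := by
  simp only [IsMaxChainOn, List.head?_cons, List.getLast?_singleton, Option.some.injEq]
  constructor
  · rintro ⟨-, rfl, rfl⟩; exact ⟨rfl, rfl⟩
  · rintro ⟨rfl, rfl⟩; exact ⟨List.isChain_singleton w, rfl, rfl⟩

lemma isMaxChainOn_cons_cons {w u : Finset ℕ} {t : List (Finset ℕ)} :
    IsMaxChainOn B S x y (w :: u :: t) ↔
      w = x ∧ Covers B S x u ∧ IsMaxChainOn B S u y (u :: t) := by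
  constructor
  · rintro ⟨hch, hhead, hlast⟩
    obtain ⟨hcov, hch⟩ := List.isChain_cons_cons.mp hch
    obtain rfl := Option.some.inj hhead
    exact ⟨rfl, hcov, hch, rfl, by rwa [List.getLast?_cons_cons] at hlast⟩
  · rintro ⟨rfl, hcov, hch, -, hlast⟩
    exact ⟨List.isChain_cons_cons.mpr ⟨hcov, hch⟩, rfl, by rwa [List.getLast?_cons_cons]⟩

lemma IsMaxChainOn.exists_eq_cons {c : List (Finset ℕ)} (h : IsMaxChainOn B S x y c) :
    ∃ t, c = x :: t := by
  obtain ⟨-, hhead, -⟩ := h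
  exact ⟨c.tail, List.eq_cons_of_mem_head? hhead⟩

lemma IsMaxChainOn.subset {c : List (Finset ℕ)} (h : IsMaxChainOn B S x y c) : x ⊆ y := by
  induction c generalizing x with
  | nil => exact absurd h not_isMaxChainOn_nil
  | cons w t ih =>
    cases t with
    | nil => exact (isMaxChainOn_singleton.mp h).2.le
    | cons u t =>
      obtain ⟨-, hcov, h⟩ := isMaxChainOn_cons_cons.mp h
      exact hcov.ssubset.le.trans (ih h)

lemma IsMaxChainOn.eq_singleton {c : List (Finset ℕ)} (h : IsMaxChainOn B S x x c) :
    c = [x] := by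
  obtain ⟨t, rfl⟩ := h.exists_eq_cons
  cases t with
  | nil => rfl
  | cons u t =>
    obtain ⟨-, hcov, h⟩ := isMaxChainOn_cons_cons.mp h
    exact absurd hcov.ssubset (not_ssubset_of_subset h.subset)

lemma isDecSeq_cons_cons_cons {w u v : Finset ℕ} {t : List (Finset ℕ)} :
    IsDecSeq B (w :: u :: v :: t) ↔ labGe (mu B w u) (mu B u v) ∧ IsDecSeq B (u :: v :: t) := by
  constructor
  · intro h
    exact ⟨h 0 (by simp), fun i hi => h (i + 1) (by simp_all)⟩
  · rintro ⟨h₀, h⟩ (_ | i) hi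
    · exact h₀
    · exact h i (by simp_all)

lemma isDecSeq_of_length_le_two {c : List (Finset ℕ)} (hc : c.length ≤ 2) : IsDecSeq B c :=
  fun _ hi => absurd hi (by omega)

lemma IsDecSeq.tail {w : Finset ℕ} {c : List (Finset ℕ)} (h : IsDecSeq B (w :: c)) :
    IsDecSeq B c :=
  fun i hi => h (i + 1) (by simp; omega)

lemma LexSucc.cons {w u : Finset ℕ} {t t' : List (Finset ℕ)}
    (h : LexSucc B (u :: t) (u :: t')) : LexSucc B (w :: u :: t) (w :: u :: t') := by
  obtain ⟨i, hi, heq, hgt⟩ := h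
  refine ⟨i + 1, by simpa using hi, fun j hj => ?_, hgt⟩
  cases j with
  | zero => simp
  | succ j => exact heq j (by omega)

lemma lexSucc_of_labGt {w u u' : Finset ℕ} {t t' : List (Finset ℕ)}
    (h : labGt (mu B w u) (mu B w u')) : LexSucc B (w :: u :: t) (w :: u' :: t') :=
  ⟨0, by simp, fun _ hj => absurd hj (Nat.not_lt_zero _), h⟩

end

lemma card_sdiff_lt_card_sdiff {x y z : Finset ℕ} (hxz : x ⊂ z) (hzy : z ⊆ y) :
    (y \ z).card < (y \ x).card := by
  rw [Finset.card_sdiff_of_subset hzy, Finset.card_sdiff_of_subset (hxz.1.trans hzy)]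
  have := Finset.card_lt_card hxz
  have := Finset.card_le_card hzy
  omega

theorem exists_isMaxChainOn_greedy (hB : IsBuilding S B) (hc : IsChordal B) {x y : Finset ℕ}
    (hx : x ∈ hatP B S) (hy : y ∈ hatP B S) (hxy : x ⊆ y) :
    ∃ c, IsMaxChainOn B S x y c ∧ c.IsChain (GreedyStep B y) := by
  by_cases hxy' : x = y
  · subst hxy'
    exact ⟨[x], isMaxChainOn_singleton.mpr ⟨rfl, rfl⟩, List.isChain_singleton x⟩
  obtain ⟨z, hz⟩ :=
    exists_greedyStep hB hx hy (Finset.ssubset_iff_subset_ne.mpr ⟨hxy, hxy'⟩)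
  have hcov := hz.covers hB hc hx hy
  have := card_sdiff_lt_card_sdiff hcov.ssubset (hz.subset hxy)
  obtain ⟨d, hd, hdg⟩ := exists_isMaxChainOn_greedy hB hc hcov.right_mem hy (hz.subset hxy)
  obtain ⟨t, rfl⟩ := hd.exists_eq_cons
  exact ⟨x :: z :: t, isMaxChainOn_cons_cons.mpr ⟨rfl, hcov, hd⟩,
    List.isChain_cons_cons.mpr ⟨hz, hdg⟩⟩
termination_by (y \ x).card

lemma isDecSeq_of_isChain_greedyStep (hB : IsBuilding S B) (hc : IsChordal B)
    {x y : Finset ℕ} (hx : x ∈ hatP B S) (hy : y ∈ hatP B S) (hxy : x ⊆ y)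
    {t : List (Finset ℕ)} (hg : (x :: t).IsChain (GreedyStep B y)) : IsDecSeq B (x :: t) := by
  induction t generalizing x with
  | nil => exact isDecSeq_of_length_le_two (by simp)
  | cons u t ih =>
    cases t with
    | nil => exact isDecSeq_of_length_le_two (by simp)
    | cons v t =>
      obtain ⟨hxu, hg⟩ := List.isChain_cons_cons.mp hg
      have huv := (List.isChain_cons_cons.mp hg).1
      exact isDecSeq_cons_cons_cons.mpr ⟨hxu.labGe_mu hB hc hx hy hxy huv,
        ih (hxu.covers hB hc hx hy).right_mem (hxu.subset hxy) hg⟩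

lemma isChain_greedyStep_of_isDecSeq (hB : IsBuilding S B) (hc : IsChordal B)
    {x y : Finset ℕ} (hy : y ∈ hatP B S) {c : List (Finset ℕ)} (hmax : IsMaxChainOn B S x y c)
    (hdec : IsDecSeq B c) : c.IsChain (GreedyStep B y) := by
  induction c generalizing x with
  | nil => exact absurd hmax not_isMaxChainOn_nil
  | cons w t ih =>
    cases t with
    | nil => exact List.isChain_singleton w
    | cons u t =>
      obtain ⟨rfl, hcov, hmax'⟩ := isMaxChainOn_cons_cons.mp hmax
      have hg := ih hmax' hdec.tail
      refine List.isChain_cons_cons.mpr ⟨?_, hg⟩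
      have huy := hmax'.subset
      obtain ⟨z, hz⟩ := exists_greedyStep hB hcov.left_mem hy (hcov.ssubset.trans_le huy)
      by_cases huz : u = z
      · exact huz ▸ hz
      cases t with
      | nil =>
        obtain rfl := (isMaxChainOn_singleton.mp hmax').2
        exact absurd (hcov.eq_of_subset (hz.covers hB hc hcov.left_mem hy)
          (hz.subset hcov.ssubset.le)).symm huz
      | cons v t =>
        exact absurd (isDecSeq_cons_cons_cons.mp hdec).1 (hz.not_labGe_mu hB hc hy hcov huy huz
          (List.isChain_cons_cons.mp hg).1)

lemma eq_of_isChain_greedyStep (hB : IsBuilding S B) {x y : Finset ℕ} {c c' : List (Finset ℕ)}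
    (hmax : IsMaxChainOn B S x y c) (hmax' : IsMaxChainOn B S x y c')
    (hg : c.IsChain (GreedyStep B y)) (hg' : c'.IsChain (GreedyStep B y)) : c = c' := by
  induction c generalizing x c' with
  | nil => exact absurd hmax not_isMaxChainOn_nil
  | cons w t ih =>
    cases t with
    | nil =>
      obtain ⟨rfl, rfl⟩ := isMaxChainOn_singleton.mp hmax
      exact hmax'.eq_singleton.symm
    | cons u t =>
      obtain ⟨rfl, -, hmaxu⟩ := isMaxChainOn_cons_cons.mp hmax
      obtain ⟨hxu, hg⟩ := List.isChain_cons_cons.mp hg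
      obtain ⟨t', rfl⟩ := hmax'.exists_eq_cons
      cases t' with
      | nil =>
        obtain rfl := (isMaxChainOn_singleton.mp hmax').2
        exact hmax.eq_singleton
      | cons u' t' =>
        obtain ⟨-, -, hmaxu'⟩ := isMaxChainOn_cons_cons.mp hmax'
        obtain ⟨hxu', hg'⟩ := List.isChain_cons_cons.mp hg'
        obtain rfl := hxu.unique hB hxu'
        rw [ih hmaxu hmaxu' hg hg']

lemma lexSucc_of_isChain_greedyStep (hB : IsBuilding S B) (hc : IsChordal B)
    {x y : Finset ℕ} (hx : x ∈ hatP B S) (hy : y ∈ hatP B S) {c c' : List (Finset ℕ)}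
    (hmax : IsMaxChainOn B S x y c) (hg : c.IsChain (GreedyStep B y))
    (hmax' : IsMaxChainOn B S x y c') (hne : c' ≠ c) : LexSucc B c c' := by
  induction c generalizing x c' with
  | nil => exact absurd hmax not_isMaxChainOn_nil
  | cons w t ih =>
    cases t with
    | nil =>
      obtain ⟨rfl, rfl⟩ := isMaxChainOn_singleton.mp hmax
      exact absurd hmax'.eq_singleton hne
    | cons z t =>
      obtain ⟨rfl, hcov, hmaxz⟩ := isMaxChainOn_cons_cons.mp hmax
      obtain ⟨hxz, hg⟩ := List.isChain_cons_cons.mp hg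
      obtain ⟨t', rfl⟩ := hmax'.exists_eq_cons
      cases t' with
      | nil =>
        obtain rfl := (isMaxChainOn_singleton.mp hmax').2
        exact absurd hmax.eq_singleton (Ne.symm hne)
      | cons u t' =>
        obtain ⟨-, hcovu, hmaxu⟩ := isMaxChainOn_cons_cons.mp hmax'
        by_cases huz : u = z
        · subst huz
          exact (ih hcov.right_mem hmaxz hg hmaxu fun h => hne (by rw [h])).cons
        · exact lexSucc_of_labGt (hxz.labGt_mu hB hc hx hy hmax.subset hcovu hmaxu.subset huz)

end BS

/-- For a chordal building set `B`, the edge labeling `μ_B` of `P̂_B` is reversed edge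
lexicographical: each interval `[x,y]` of `P̂_B` has a unique maximal chain with
decreasing label sequence, and this chain lexicographically succeeds every other
maximal chain of the interval. Hence `P̂_B` is EL-shellable. -/
theorem hatP_EL_shellable (S : Finset ℕ) (B : Finset (Finset ℕ))
    (hB : BS.IsBuilding S B) (hc : BS.IsChordal B) :
    ∀ x y : Finset ℕ, x ∈ BS.hatP B S → y ∈ BS.hatP B S → x ⊆ y →
      ∃ c : List (Finset ℕ),
        (BS.IsMaxChainOn B S x y c ∧ BS.IsDecSeq B c) ∧
        (∀ c', BS.IsMaxChainOn B S x y c' → BS.IsDecSeq B c' → c' = c) ∧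
        (∀ c', BS.IsMaxChainOn B S x y c' → c' ≠ c → BS.LexSucc B c c') := by
  intro x y hx hy hxy
  obtain ⟨c, hmax, hg⟩ := BS.exists_isMaxChainOn_greedy hB hc hx hy hxy
  obtain ⟨t, rfl⟩ := hmax.exists_eq_cons
  refine ⟨x :: t, ⟨hmax, BS.isDecSeq_of_isChain_greedyStep hB hc hx hy hxy hg⟩, ?_, ?_⟩
  · intro c' hmax' hdec
    exact BS.eq_of_isChain_greedyStep hB hmax' hmax
      (BS.isChain_greedyStep_of_isDecSeq hB hc hy hmax' hdec) hg
  · intro c' hmax' hne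
    exact BS.lexSucc_of_isChain_greedyStep hB hc hx hy hmax hg hmax' hne
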